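/- Let a ≥ 1 be an integer and G the subgroup of permutations of (ℤ/aℤ)² generated by (x, y) ↦ (x + y, y) and (x, y) ↦ (x, x + y). Then the number of G-orbits on (ℤ/aℤ)² equals the number of positive divisors of a. -/

import Mathlib

/-!
The quantity `gcd(x, y, a)` (computed on representatives) is unchanged by both shears, since
`gcd(x + y, y) = gcd(x, y)`. Conversely, the shears realise the steps of Euclid's algorithm, so
every pair `(x, y)` can be moved to `(gcd(x, y), 0) = (gcd(x, y), a)` and from there to
`(gcd(x, y, a), 0)`. Hence the orbits are classified by the divisors of `a`.
-/

/-- The shear (x, y) ↦ (x + y, y) as a permutation of (ℤ/aℤ)². -/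
def shear1 (a : ℕ) : Equiv.Perm (ZMod a × ZMod a) where
  toFun p := (p.1 + p.2, p.2)
  invFun p := (p.1 - p.2, p.2)
  left_inv p := by simp
  right_inv p := by simp

/-- The shear (x, y) ↦ (x, x + y) as a permutation of (ℤ/aℤ)². -/
def shear2 (a : ℕ) : Equiv.Perm (ZMod a × ZMod a) where
  toFun p := (p.1, p.1 + p.2)
  invFun p := (p.1, p.2 - p.1)
  left_inv p := by simp
  right_inv p := by simp

open MulAction

abbrev shearGroup (a : ℕ) : Subgroup (Equiv.Perm (ZMod a × ZMod a)) :=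
  Subgroup.closure {shear1 a, shear2 a}

abbrev ShearOrbits (a : ℕ) : Type :=
  orbitRel.Quotient (shearGroup a) (ZMod a × ZMod a)

theorem Equiv.Perm.apply_eq_of_mem_closure {α β : Type*} {S : Set (Equiv.Perm α)} {f : α → β}
    (hS : ∀ σ ∈ S, ∀ x, f (σ x) = f x) {g : Equiv.Perm α} (hg : g ∈ Subgroup.closure S)
    (x : α) : f (g x) = f x := by
  induction hg using Subgroup.closure_induction generalizing x with
  | mem σ hσ => exact hS σ hσ x
  | one => rfl
  | mul σ τ _ _ hσ hτ => rw [Equiv.Perm.mul_apply, hσ, hτ]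
  | inv σ _ hσ => simpa using (hσ (σ⁻¹ x)).symm

section Orbits

variable {a : ℕ}

theorem shear1_mem_shearGroup : shear1 a ∈ shearGroup a :=
  Subgroup.subset_closure (Set.mem_insert _ _)

theorem shear2_mem_shearGroup : shear2 a ∈ shearGroup a :=
  Subgroup.subset_closure (Set.mem_insert_of_mem _ rfl)

theorem shearOrbits_mk_apply {g : Equiv.Perm (ZMod a × ZMod a)} (hg : g ∈ shearGroup a)
    (p : ZMod a × ZMod a) :
    (Quotient.mk'' (g p) : ShearOrbits a) = Quotient.mk'' p :=
  Quotient.sound' (orbitRel_apply.mpr ⟨⟨g, hg⟩, rfl⟩)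

theorem shear1_pow_apply (k : ℕ) (p : ZMod a × ZMod a) :
    (shear1 a ^ k) p = (p.1 + k * p.2, p.2) := by
  induction k with
  | zero => simp
  | succ k ih =>
    rw [pow_succ', Equiv.Perm.mul_apply, ih]
    simp only [shear1, Equiv.coe_fn_mk, Nat.cast_succ, Prod.mk.injEq, and_true]
    ring

theorem shear2_pow_apply (k : ℕ) (p : ZMod a × ZMod a) :
    (shear2 a ^ k) p = (p.1, p.2 + k * p.1) := by
  induction k with
  | zero => simp
  | succ k ih =>
    rw [pow_succ', Equiv.Perm.mul_apply, ih]
    simp only [shear2, Equiv.coe_fn_mk, Nat.cast_succ, Prod.mk.injEq, true_and]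
    ring

theorem shearOrbits_mk_add_mul_fst (x y : ZMod a) (k : ℕ) :
    (Quotient.mk'' (x + k * y, y) : ShearOrbits a) = Quotient.mk'' (x, y) := by
  simpa only [shear1_pow_apply] using
    shearOrbits_mk_apply (pow_mem shear1_mem_shearGroup k) (x, y)

theorem shearOrbits_mk_add_mul_snd (x y : ZMod a) (k : ℕ) :
    (Quotient.mk'' (x, y + k * x) : ShearOrbits a) = Quotient.mk'' (x, y) := by
  simpa only [shear2_pow_apply] using
    shearOrbits_mk_apply (pow_mem shear2_mem_shearGroup k) (x, y)

/-- Both orders of the pair are carried along because a Euclid step swaps the roles of the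
coordinates. -/
theorem shearOrbits_mk_natCast_eq_gcd (m n : ℕ) :
    (Quotient.mk'' ((m : ZMod a), (n : ZMod a)) : ShearOrbits a) =
        Quotient.mk'' ((m.gcd n : ZMod a), 0) ∧
      (Quotient.mk'' ((n : ZMod a), (m : ZMod a)) : ShearOrbits a) =
        Quotient.mk'' ((m.gcd n : ZMod a), 0) := by
  induction m, n using Nat.gcd.induction with
  | H0 n =>
    have h1 := shearOrbits_mk_add_mul_fst (0 : ZMod a) n 1
    have h2 := shearOrbits_mk_add_mul_snd (n : ZMod a) 0 1
    simp only [Nat.cast_one, one_mul, zero_add] at h1 h2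
    simp only [Nat.cast_zero, Nat.gcd_zero_left, and_true]
    rw [← h1, h2]
  | H1 m n _ ih =>
    have hn : (n : ZMod a) = ((n % m : ℕ) : ZMod a) + ((n / m : ℕ) : ZMod a) * m := by
      rw [← Nat.cast_mul, ← Nat.cast_add, mul_comm, Nat.mod_add_div]
    rw [Nat.gcd_rec, hn, shearOrbits_mk_add_mul_snd, shearOrbits_mk_add_mul_fst]
    exact ih.symm

end Orbits

def pairGcd {a : ℕ} (p : ZMod a × ZMod a) : ℕ :=
  (p.1.val.gcd p.2.val).gcd a

theorem pairGcd_natCast_zero {a d : ℕ} (hd : d ∣ a) : pairGcd ((d : ZMod a), 0) = d := by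
  rw [pairGcd, ZMod.val_natCast, ZMod.val_zero, Nat.gcd_zero_right, ← Nat.gcd_rec,
    Nat.gcd_eq_right hd]

section Invariant

variable {a : ℕ} [NeZero a]

theorem ZMod.gcd_gcd_val_add (x y : ZMod a) :
    ((x + y).val.gcd y.val).gcd a = (x.val.gcd y.val).gcd a := by
  rw [Nat.gcd_assoc, Nat.gcd_assoc]
  apply Nat.ModEq.gcd_eq
  calc (x + y).val ≡ x.val + y.val [MOD y.val.gcd a] := by
        rw [ZMod.val_add]; exact (Nat.mod_modEq _ _).of_dvd (Nat.gcd_dvd_right _ _)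
    _ ≡ x.val + 0 [MOD y.val.gcd a] :=
        Nat.ModEq.add_left _ (Nat.modEq_zero_iff_dvd.2 (Nat.gcd_dvd_left _ _))

theorem pairGcd_shear1 (p : ZMod a × ZMod a) : pairGcd (shear1 a p) = pairGcd p :=
  ZMod.gcd_gcd_val_add p.1 p.2

theorem pairGcd_shear2 (p : ZMod a × ZMod a) : pairGcd (shear2 a p) = pairGcd p := by
  change (p.1.val.gcd (p.1 + p.2).val).gcd a = (p.1.val.gcd p.2.val).gcd a
  rw [Nat.gcd_comm p.1.val, add_comm, ZMod.gcd_gcd_val_add, Nat.gcd_comm p.2.val]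

theorem pairGcd_apply_of_mem {g : Equiv.Perm (ZMod a × ZMod a)} (hg : g ∈ shearGroup a)
    (p : ZMod a × ZMod a) : pairGcd (g p) = pairGcd p := by
  refine Equiv.Perm.apply_eq_of_mem_closure ?_ hg p
  rintro σ (rfl | rfl)
  exacts [pairGcd_shear1, pairGcd_shear2]

theorem pairGcd_mem_divisors (p : ZMod a × ZMod a) : pairGcd p ∈ a.divisors :=
  Nat.mem_divisors.2 ⟨Nat.gcd_dvd_right _ _, NeZero.ne a⟩

theorem shearOrbits_mk_eq_pairGcd (p : ZMod a × ZMod a) :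
    (Quotient.mk'' p : ShearOrbits a) = Quotient.mk'' ((pairGcd p : ZMod a), 0) := by
  obtain ⟨x, y⟩ := p
  calc (Quotient.mk'' (x, y) : ShearOrbits a)
      = Quotient.mk'' ((x.val : ZMod a), (y.val : ZMod a)) := by
        rw [ZMod.natCast_zmod_val, ZMod.natCast_zmod_val]
    _ = Quotient.mk'' ((x.val.gcd y.val : ZMod a), (a : ZMod a)) := by
        rw [(shearOrbits_mk_natCast_eq_gcd _ _).1, ZMod.natCast_self]
    _ = Quotient.mk'' ((pairGcd (x, y) : ZMod a), 0) :=
        (shearOrbits_mk_natCast_eq_gcd _ _).1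

def shearOrbitsEquivDivisors : ShearOrbits a ≃ a.divisors where
  toFun := Quotient.lift (fun p ↦ ⟨pairGcd p, pairGcd_mem_divisors p⟩) fun p q hpq ↦ by
    obtain ⟨g, rfl⟩ := orbitRel_apply.mp hpq
    exact Subtype.ext (pairGcd_apply_of_mem g.2 q)
  invFun d := Quotient.mk'' ((d : ZMod a), 0)
  left_inv := Quotient.ind fun p ↦ (shearOrbits_mk_eq_pairGcd p).symm
  right_inv d := Subtype.ext (pairGcd_natCast_zero (Nat.dvd_of_mem_divisors d.2))

end Invariant

/-- The number of orbits of the group generated by the two shears on (ℤ/aℤ)²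
equals the number of positive divisors of a. -/
theorem card_orbits_eq_card_divisors (a : ℕ) (ha : 1 ≤ a) :
    Nat.card (MulAction.orbitRel.Quotient
        (Subgroup.closure {shear1 a, shear2 a}) (ZMod a × ZMod a)) =
      a.divisors.card := by
  have : NeZero a := NeZero.of_pos ha
  rw [Nat.card_congr shearOrbitsEquivDivisors, Nat.card_eq_finsetCard]
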